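/- arXiv:1011.3612 — 3 statements merged into one kernel-verified Lean document; each statement's English description precedes it below -/
import Mathlib

section
/- Suppose F_X is a distribution function on (0,∞) with reciprocal hazard function h_X such that ξ_X := lim_{x→x^F} h_X'(x) exists and is ≤ 0, where x^F = sup{x : F_X(x) < 1} satisfies 0 < x^F ≤ ∞. Then lim_{x→x^F} h_X(x)/x = 0, and consequently for every λ the limiting shape parameter of the Box–Cox transformed variable, ξ_Y = ξ_X + (λ−1)·lim_{x→x^F} h_X(x)/x, equals ξ_X. -/
/-!
At an infinite endpoint `h'` is eventually below any `ε > 0`, so by the mean value theorem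
`h` grows at most like `ε x`; together with `h ≥ 0` this gives `h(x)/x → 0`. At a finite
endpoint `c > 0`, `h → 0` gives `h(x)/x → 0 / c`. Hence the Box–Cox correction
`(λ - 1) h(x)/x` vanishes in the limit and the shape parameter is unchanged.
-/

open Filter Topology Asymptotics Set

theorem exists_le_add_mul_sub_of_eventually_deriv_le {f : ℝ → ℝ} {C : ℝ}
    (h : ∀ᶠ x in atTop, DifferentiableAt ℝ f x ∧ deriv f x ≤ C) :
    ∃ a, ∀ x ≥ a, f x ≤ f a + C * (x - a) := by
  obtain ⟨a, ha⟩ := eventually_atTop.1 h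
  have hdiff : DifferentiableOn ℝ f (Ici a) := fun x hx => (ha x hx).1.differentiableWithinAt
  refine ⟨a, fun x hx => ?_⟩
  have := (convex_Ici a).image_sub_le_mul_sub_of_deriv_le hdiff.continuousOn
    (hdiff.mono interior_subset) (fun y hy => (ha y (interior_subset hy)).2)
    a self_mem_Ici x hx hx
  linarith

theorem isLittleO_id_atTop_of_tendsto_deriv_nonpos {f : ℝ → ℝ} {ξ : ℝ} (hξ : ξ ≤ 0)
    (hf : ∀ᶠ x in atTop, 0 ≤ f x ∧ DifferentiableAt ℝ f x)
    (hderiv : Tendsto (deriv f) atTop (𝓝 ξ)) :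
    f =o[atTop] id := by
  refine isLittleO_iff.2 fun c hc => ?_
  have hderiv_le : ∀ᶠ x in atTop, deriv f x ≤ c / 2 :=
    hderiv.eventually (eventually_le_nhds (by linarith))
  obtain ⟨a, hle⟩ := exists_le_add_mul_sub_of_eventually_deriv_le
    ((hf.mono fun _ hx => hx.2).and hderiv_le)
  filter_upwards [hf, eventually_ge_atTop a, eventually_ge_atTop (2 * f a / c - a),
    eventually_ge_atTop 0] with x hfx hxa hx_large hx_nonneg
  have hfa : f a - c / 2 * a ≤ c / 2 * x := by
    have : 2 * f a / c ≤ x + a := by linarith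
    rw [div_le_iff₀ hc] at this
    linarith
  rw [Real.norm_of_nonneg hfx.1, id, Real.norm_of_nonneg hx_nonneg]
  linarith [hle x hxa]

/-- If the reciprocal hazard function `h_X` has derivative tending to a limit
`ξ_X ≤ 0` at the upper endpoint `x^F` (finite positive or infinite), then
`h_X(x)/x → 0` there, and consequently for every Box–Cox parameter `λ` the
transformed shape limit `h_X'(x) + (λ-1)·h_X(x)/x` tends to `ξ_X`. The filter
`l` is the approach to the endpoint: `atTop` when `x^F = ∞`, or `𝓝[<] c` for
a finite endpoint `c > 0`, in which case `h_X → 0` there (as `h_X` is the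
reciprocal hazard of a distribution with endpoint `c`). -/
theorem boxcox_shape_invariant_nonpos
    (hX : ℝ → ℝ) (ξX : ℝ) (hξ : ξX ≤ 0) (l : Filter ℝ)
    (hcase :
      (l = atTop ∧ (∀ᶠ x in l, 0 ≤ hX x ∧ DifferentiableAt ℝ hX x)) ∨
      (∃ c : ℝ, 0 < c ∧ l = nhdsWithin c (Set.Iio c) ∧ Tendsto hX l (nhds 0)))
    (hderiv : Tendsto (deriv hX) l (nhds ξX)) :
    Tendsto (fun x => hX x / x) l (nhds 0) ∧
      ∀ lam : ℝ,
        Tendsto (fun x => deriv hX x + (lam - 1) * hX x / x) l (nhds ξX) := by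
  have hratio : Tendsto (fun x => hX x / x) l (𝓝 0) := by
    rcases hcase with ⟨rfl, hev⟩ | ⟨c, hc, rfl, hX0⟩
    · exact (isLittleO_id_atTop_of_tendsto_deriv_nonpos hξ hev hderiv).tendsto_div_nhds_zero
    · simpa [Pi.div_def] using hX0.div (tendsto_nhdsWithin_of_tendsto_nhds tendsto_id) hc.ne'
  refine ⟨hratio, fun lam => ?_⟩
  simpa only [mul_zero, add_zero, mul_div_assoc] using hderiv.add (hratio.const_mul (lam - 1))
end

section
/- If h: [a, ∞) → ℝ is differentiable, h(x) ≥ 0 for all x ≥ a, and h'(x) → L as x → ∞ with L ≤ 0, then h(x)/x → 0 as x → ∞. (In fact L must equal 0 and h(x)/x → 0.) -/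
/-! By the mean value theorem, `h x - L * x` grows sublinearly, so `h x / x → L`; since `h ≥ 0`
this limit is nonnegative, which together with `L ≤ 0` forces `L = 0`. -/

open Real Filter Asymptotics Set Topology

lemma isLittleO_id_atTop_of_tendsto_deriv_zero {f : ℝ → ℝ} {a : ℝ}
    (hf : ∀ x, a ≤ x → DifferentiableAt ℝ f x) (hf' : Tendsto (deriv f) atTop (𝓝 0)) :
    f =o[atTop] id := by
  refine isLittleO_iff.2 fun c hc => ?_
  obtain ⟨x₀, hx₀⟩ := eventually_atTop.1 <|
    ((hf'.eventually (Metric.closedBall_mem_nhds 0 (half_pos hc))).and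
      (eventually_ge_atTop a)).and (eventually_ge_atTop 0)
  have hax₀ : a ≤ x₀ := (hx₀ x₀ le_rfl).1.2
  have hx₀_nonneg : 0 ≤ x₀ := (hx₀ x₀ le_rfl).2
  filter_upwards [isLittleO_iff.1 (isLittleO_const_id_atTop (f x₀)) (half_pos hc),
    eventually_ge_atTop x₀] with x hconst hx
  have hmvt : ‖f x - f x₀‖ ≤ c / 2 * ‖x - x₀‖ :=
    (convex_Ici x₀).norm_image_sub_le_of_norm_deriv_le
      (fun y hy => hf y (hax₀.trans hy))
      (fun y hy => mem_closedBall_zero_iff.1 (hx₀ y hy).1.1) (mem_Ici.2 le_rfl) hx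
  have hdist : ‖x - x₀‖ ≤ ‖x‖ := by
    rw [norm_of_nonneg (sub_nonneg.2 hx), norm_of_nonneg (hx₀_nonneg.trans hx)]
    linarith
  calc ‖f x‖ ≤ ‖f x₀‖ + ‖f x - f x₀‖ := norm_le_insert' _ _
    _ ≤ c / 2 * ‖x‖ + c / 2 * ‖x‖ := add_le_add hconst (hmvt.trans (by gcongr))
    _ = c * ‖id x‖ := by simp only [id]; ring

lemma tendsto_div_atTop_of_tendsto_deriv {f : ℝ → ℝ} {a L : ℝ}
    (hf : ∀ x, a ≤ x → DifferentiableAt ℝ f x) (hf' : Tendsto (deriv f) atTop (𝓝 L)) :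
    Tendsto (fun x => f x / x) atTop (𝓝 L) := by
  set g : ℝ → ℝ := fun x => f x - L * x
  have hg_deriv (x : ℝ) (hx : a ≤ x) : HasDerivAt g (deriv f x - L) x := by
    have hsub := (hf x hx).hasDerivAt.sub ((hasDerivAt_id' x).const_mul L)
    rwa [mul_one] at hsub
  have hg' : Tendsto (deriv g) atTop (𝓝 0) := by
    rw [← sub_self L]
    refine (hf'.sub_const L).congr' ?_
    filter_upwards [eventually_ge_atTop a] with x hx
    exact (hg_deriv x hx).deriv.symm
  have hg_div := (isLittleO_id_atTop_of_tendsto_deriv_zero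
    (fun x hx => (hg_deriv x hx).differentiableAt) hg').tendsto_div_nhds_zero
  rw [← zero_add L]
  refine (hg_div.add_const L).congr' ?_
  filter_upwards [eventually_ne_atTop 0] with x hx
  simp only [g, id]
  field_simp
  ring

/-- Key analytic lemma: if `h : [a,∞) → ℝ` is differentiable and nonnegative,
and `h'(x) → L` as `x → ∞` with `L ≤ 0`, then in fact `L = 0` and
`h(x)/x → 0` as `x → ∞`. -/
theorem nonneg_deriv_limit_nonpos
    (h : ℝ → ℝ) (a L : ℝ)
    (hdiff : ∀ x, a ≤ x → DifferentiableAt ℝ h x)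
    (hnn : ∀ x, a ≤ x → 0 ≤ h x)
    (hL : Tendsto (deriv h) atTop (nhds L))
    (hLle : L ≤ 0) :
    L = 0 ∧ Tendsto (fun x => h x / x) atTop (nhds 0) := by
  have hslope := tendsto_div_atTop_of_tendsto_deriv hdiff hL
  have hL_nonneg : 0 ≤ L := ge_of_tendsto hslope <| by
    filter_upwards [eventually_ge_atTop (max a 0)] with x hx
    exact div_nonneg (hnn x (le_of_max_le_left hx)) (le_of_max_le_right hx)
  have hL0 : L = 0 := le_antisymm hLle hL_nonneg
  exact ⟨hL0, hL0 ▸ hslope⟩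
end

section
/- Let F_X be the log-Pareto distribution with 1 − F_X(x) = [1 + (γ/β)(log x − u)]^{−1/γ} for γ > 0, β > 0, u ∈ ℝ (support x ≥ e^u). Then lim_{x→∞} h_X'(x) does not exist as a finite limit (h_X'(x) → ∞), so F_X lies outside every extreme value domain of attraction; but the log-transform Y = log X satisfies lim_{y→∞} h_Y'(y) = γ, so Y is in the Fréchet domain of attraction with shape parameter γ. -/
/-!
For a survival function of the form `g ^ p` the reciprocal hazard is `-g / (p g')`, so with
`p = -1/γ` both reciprocal hazards are explicit: `h_Y(y) = β + γ (y - u)` and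
`h_X(x) = x (β + γ (log x - u))`. Hence `h_Y' = γ`, while `h_X'(x) = β + γ (log x - u) + γ`
grows like `γ log x`.
-/

open Real Filter

noncomputable section

def reciprocalHazard (F : ℝ → ℝ) (x : ℝ) : ℝ := (1 - F x) / deriv F x

def genParetoCDF (γ β u y : ℝ) : ℝ := 1 - (1 + (γ / β) * (y - u)) ^ (-1 / γ)

def logParetoCDF (γ β u x : ℝ) : ℝ := genParetoCDF γ β u (log x)

end

theorem reciprocalHazard_one_sub_rpow {g : ℝ → ℝ} {g' x : ℝ} (p : ℝ) (hg : HasDerivAt g g' x)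
    (hx : 0 < g x) : reciprocalHazard (fun t => 1 - g t ^ p) x = -g x / (p * g') := by
  have hderiv : deriv (fun t => 1 - g t ^ p) x = -(g' * p * g x ^ (p - 1)) :=
    ((hg.rpow_const (Or.inl hx.ne')).const_sub 1).deriv
  have hpow : g x ^ p = g x ^ (p - 1) * g x := by
    rw [← rpow_add_one hx.ne', sub_add_cancel]
  have hpos : 0 < g x ^ (p - 1) := rpow_pos_of_pos hx _
  rw [reciprocalHazard, hderiv, sub_sub_cancel, hpow]
  field_simp

theorem Filter.EventuallyEq.deriv_atTop {f g : ℝ → ℝ} (h : f =ᶠ[atTop] g) :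
    deriv f =ᶠ[atTop] deriv g := by
  obtain ⟨a, ha⟩ := eventually_atTop.1 h
  filter_upwards [eventually_gt_atTop a] with x hx
  exact EventuallyEq.deriv_eq (eventually_of_mem (Ioi_mem_nhds hx) fun y hy => ha y hy.le)

section Pareto

variable {γ β : ℝ} (u : ℝ)

theorem reciprocalHazard_genParetoCDF (hγ : 0 < γ) (hβ : 0 < β) :
    reciprocalHazard (genParetoCDF γ β u) =ᶠ[atTop] fun y => β + γ * (y - u) := by
  filter_upwards [eventually_gt_atTop u] with y hy
  have hg : HasDerivAt (fun t => 1 + (γ / β) * (t - u)) (γ / β) y := by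
    simpa using (((hasDerivAt_id y).sub_const u).const_mul (γ / β)).const_add 1
  have hpos : 0 < 1 + (γ / β) * (y - u) :=
    add_pos one_pos (mul_pos (div_pos hγ hβ) (sub_pos.2 hy))
  rw [show genParetoCDF γ β u = fun t => 1 - (1 + (γ / β) * (t - u)) ^ (-1 / γ) from rfl,
    reciprocalHazard_one_sub_rpow _ hg hpos]
  field_simp

theorem reciprocalHazard_logParetoCDF (hγ : 0 < γ) (hβ : 0 < β) :
    reciprocalHazard (logParetoCDF γ β u) =ᶠ[atTop] fun x => x * (β + γ * (log x - u)) := by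
  filter_upwards [eventually_gt_atTop (exp u)] with x hx
  have hx0 : 0 < x := (exp_pos u).trans hx
  have hlog : u < log x := (lt_log_iff_exp_lt hx0).mpr hx
  have hg : HasDerivAt (fun t => 1 + (γ / β) * (log t - u)) (γ / β * x⁻¹) x := by
    simpa using (((hasDerivAt_log hx0.ne').sub_const u).const_mul (γ / β)).const_add 1
  have hpos : 0 < 1 + (γ / β) * (log x - u) :=
    add_pos one_pos (mul_pos (div_pos hγ hβ) (sub_pos.2 hlog))
  rw [show logParetoCDF γ β u = fun t => 1 - (1 + (γ / β) * (log t - u)) ^ (-1 / γ) from rfl,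
    reciprocalHazard_one_sub_rpow _ hg hpos]
  field_simp

theorem deriv_reciprocalHazard_genParetoCDF (hγ : 0 < γ) (hβ : 0 < β) :
    deriv (reciprocalHazard (genParetoCDF γ β u)) =ᶠ[atTop] fun _ => γ := by
  refine (reciprocalHazard_genParetoCDF u hγ hβ).deriv_atTop.trans (.of_eq ?_)
  ext y
  simp

theorem deriv_reciprocalHazard_logParetoCDF (hγ : 0 < γ) (hβ : 0 < β) :
    deriv (reciprocalHazard (logParetoCDF γ β u)) =ᶠ[atTop]
      fun x => β + γ * (log x - u) + γ := by
  refine (reciprocalHazard_logParetoCDF u hγ hβ).deriv_atTop.trans ?_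
  filter_upwards [eventually_gt_atTop 0] with x hx
  have h : HasDerivAt (fun t => t * (β + γ * (log t - u)))
      (1 * (β + γ * (log x - u)) + x * (γ * x⁻¹)) x :=
    (hasDerivAt_id' x).mul ((((hasDerivAt_log hx.ne').sub_const u).const_mul γ).const_add β)
  rw [h.deriv]
  field_simp

theorem tendsto_deriv_reciprocalHazard_logParetoCDF (hγ : 0 < γ) (hβ : 0 < β) :
    Tendsto (deriv (reciprocalHazard (logParetoCDF γ β u))) atTop atTop := by
  refine Tendsto.congr' (deriv_reciprocalHazard_logParetoCDF u hγ hβ).symm ?_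
  refine tendsto_atTop_add_const_right _ γ (tendsto_atTop_add_const_left _ β ?_)
  exact (tendsto_atTop_add_const_right _ (-u) tendsto_log_atTop).const_mul_atTop hγ

end Pareto

/-- Log-Pareto distribution `1 - F_X(x) = [1 + (γ/β)(log x - u)]^(-1/γ)`,
`γ, β > 0`: the reciprocal hazard derivative `h_X'` tends to `∞` (so no finite
limit exists and `F_X` lies outside every extreme value domain of attraction),
while the log-transform `Y = log X`, with generalized Pareto distribution
function `F_Y(y) = 1 - [1 + (γ/β)(y - u)]^(-1/γ)`, satisfies
`h_Y'(y) → γ`, so `Y` is in the Fréchet domain of attraction with shape `γ`. -/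
theorem logPareto_general_boxcox
    (γ β u : ℝ) (hγ : 0 < γ) (hβ : 0 < β)
    (FX hX FY hY : ℝ → ℝ)
    (hFX : FX = fun x => 1 - (1 + (γ / β) * (Real.log x - u)) ^ (-1 / γ))
    (hhX : hX = fun x => (1 - FX x) / deriv FX x)
    (hFY : FY = fun y => 1 - (1 + (γ / β) * (y - u)) ^ (-1 / γ))
    (hhY : hY = fun y => (1 - FY y) / deriv FY y) :
    (¬ ∃ L : ℝ, Tendsto (deriv hX) atTop (nhds L)) ∧
    Tendsto (deriv hX) atTop atTop ∧
    Tendsto (deriv hY) atTop (nhds γ) := by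
  obtain rfl : hX = reciprocalHazard (logParetoCDF γ β u) := by rw [hhX, hFX]; rfl
  obtain rfl : hY = reciprocalHazard (genParetoCDF γ β u) := by rw [hhY, hFY]; rfl
  have hX_atTop := tendsto_deriv_reciprocalHazard_logParetoCDF u hγ hβ
  refine ⟨fun ⟨L, hL⟩ => not_tendsto_nhds_of_tendsto_atTop hX_atTop L hL, hX_atTop, ?_⟩
  exact tendsto_const_nhds.congr' (deriv_reciprocalHazard_genParetoCDF u hγ hβ).symm
end
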